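/- For every integer p ≥ 2, the plumbing matrix P is negative definite: xᵀPx < 0 for every nonzero vector x ∈ ℝ^{p-1}. -/

import Mathlib

/-- The plumbing matrix `P` of the configuration `C_p` (over `ℝ`): diagonal entries `-2`
except the last one which is `-(p+2)`, entries `1` just off the diagonal, `0` elsewhere. -/
def plumbing (p : ℕ) : Matrix (Fin (p-1)) (Fin (p-1)) ℝ :=
  Matrix.of fun i j =>
    if i = j then (if (i : ℕ) = p - 2 then -((p : ℝ) + 2) else -2)
    else if (i : ℕ) + 1 = (j : ℕ) ∨ (j : ℕ) + 1 = (i : ℕ) then 1 else 0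

open Finset in
/-- for `p ≥ 2` the plumbing matrix is negative definite:
`xᵀ P x < 0` for every nonzero `x ∈ ℝ^{p-1}`. -/
theorem stmt_1 (p : ℕ) (hp : 2 ≤ p) :
    ∀ x : Fin (p-1) → ℝ, x ≠ 0 →
      dotProduct x ((plumbing p).mulVec x) < 0 := by
  set n := p - 1 with hn
  intro x hx
  have hn1 : 1 ≤ n := by omega
  set y : ℕ → ℝ := fun i => if h : i < n then x ⟨i, h⟩ else 0 with hy
  have hyx : ∀ i : Fin n, y (i : ℕ) = x i := by
    intro i; simp [hy, i.isLt]
  have hy0 : ∀ i, n ≤ i → y i = 0 := by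
    intro i h
    simp only [hy]
    rw [dif_neg (by omega)]
  set d : ℕ → ℝ := fun i => if i = n - 1 then -((p:ℝ)+2) else -2 with hd
  -- Step A: rewrite the quadratic form as a sum over ℕ-ranges
  have hstep : dotProduct x ((plumbing p).mulVec x)
      = ∑ i ∈ range n,
          y i * (d i * y i + (if 1 ≤ i then y (i-1) else 0) + y (i+1)) := by
    rw [← Fin.sum_univ_eq_sum_range
      (fun i => y i * (d i * y i + (if 1 ≤ i then y (i-1) else 0) + y (i+1))) n]
    simp only [dotProduct, Matrix.mulVec]
    apply Finset.sum_congr rfl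
    intro i _
    have hinner : ∑ j : Fin n, plumbing p i j * x j
        = d (i:ℕ) * y (i:ℕ) + (if 1 ≤ (i:ℕ) then y ((i:ℕ)-1) else 0) + y ((i:ℕ)+1) := by
      have key : ∀ j : Fin n, plumbing p i j * x j
          = (if (j:ℕ) = (i:ℕ) then d (i:ℕ) * y (j:ℕ) else 0)
            + (if (j:ℕ) + 1 = (i:ℕ) then y (j:ℕ) else 0)
            + (if (j:ℕ) = (i:ℕ) + 1 then y (j:ℕ) else 0) := by
        intro j
        have hxy : x j = y (j:ℕ) := (hyx j).symm
        have hpn : p - 2 = n - 1 := by omega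
        simp only [plumbing, Matrix.of_apply, Fin.ext_iff, hpn, hxy, hd]
        by_cases h1 : (i:ℕ) = (j:ℕ)
        · rw [if_pos h1, if_pos h1.symm,
            if_neg (show ¬((j:ℕ) + 1 = (i:ℕ)) by omega),
            if_neg (show ¬((j:ℕ) = (i:ℕ) + 1) by omega)]
          ring
        · rw [if_neg h1, if_neg (fun h : (j:ℕ) = (i:ℕ) => h1 h.symm)]
          by_cases h2 : (i:ℕ) + 1 = (j:ℕ)
          · rw [if_pos (Or.inl h2),
              if_neg (show ¬((j:ℕ) + 1 = (i:ℕ)) by omega),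
              if_pos (show (j:ℕ) = (i:ℕ) + 1 by omega)]
            ring
          · by_cases h3 : (j:ℕ) + 1 = (i:ℕ)
            · rw [if_pos (Or.inr h3), if_pos h3,
                if_neg (show ¬((j:ℕ) = (i:ℕ) + 1) by omega)]
              ring
            · rw [if_neg (show ¬((i:ℕ) + 1 = (j:ℕ) ∨ (j:ℕ) + 1 = (i:ℕ)) by omega),
                if_neg h3, if_neg (show ¬((j:ℕ) = (i:ℕ) + 1) by omega)]
              ring
      rw [show (∑ j : Fin n, plumbing p i j * x j)
          = ∑ j : Fin n, ((fun m => (if m = (i:ℕ) then d (i:ℕ) * y m else 0)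
              + (if m + 1 = (i:ℕ) then y m else 0)
              + (if m = (i:ℕ) + 1 then y m else 0)) (j:ℕ))
          from Finset.sum_congr rfl (fun j _ => key j)]
      rw [Fin.sum_univ_eq_sum_range (fun m => (if m = (i:ℕ) then d (i:ℕ) * y m else 0)
              + (if m + 1 = (i:ℕ) then y m else 0)
              + (if m = (i:ℕ) + 1 then y m else 0)) n]
      rw [Finset.sum_add_distrib, Finset.sum_add_distrib]
      congr 1
      · congr 1
        · rw [Finset.sum_ite_eq' (range n) (i:ℕ) (fun m => d (i:ℕ) * y m)]
          rw [if_pos (mem_range.mpr i.isLt)]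
        · by_cases h1 : 1 ≤ (i:ℕ)
          · rw [if_pos h1]
            have hc : ∀ m ∈ range n, (if m + 1 = (i:ℕ) then y m else 0)
                = if m = (i:ℕ) - 1 then y m else 0 := by
              intro m _
              exact if_congr (by omega) rfl rfl
            rw [Finset.sum_congr rfl hc,
              Finset.sum_ite_eq' (range n) ((i:ℕ)-1) (fun m => y m)]
            rw [if_pos (mem_range.mpr (by have := i.isLt; omega))]
          · rw [if_neg h1]
            apply Finset.sum_eq_zero
            intro m _
            rw [if_neg (by omega)]
      · rw [Finset.sum_ite_eq' (range n) ((i:ℕ)+1) (fun m => y m)]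
        by_cases h1 : (i:ℕ)+1 < n
        · rw [if_pos (mem_range.mpr h1)]
        · rw [if_neg (by simp [mem_range]; omega), hy0 _ (by omega)]
    rw [hinner, hyx]
  rw [hstep]
  set S := ∑ i ∈ range n, (y i)^2 with hS
  set T := ∑ i ∈ range (n-1), y i * y (i+1) with hT
  -- Step B: the sum equals -2S - p·y(n-1)² + 2T
  have hL : (∑ i ∈ range n,
        y i * (d i * y i + (if 1 ≤ i then y (i-1) else 0) + y (i+1)))
      = -2*S - (p:ℝ) * (y (n-1))^2 + 2*T := by
    have e1 : ∀ i, y i * (d i * y i + (if 1 ≤ i then y (i-1) else 0) + y (i+1))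
        = ((-2) * (y i)^2 + (if i = n-1 then (-(p:ℝ)) * (y i)^2 else 0))
          + (if 1 ≤ i then y i * y (i-1) else 0)
          + y i * y (i+1) := by
      intro i
      simp only [hd]
      by_cases h1 : i = n-1
      · by_cases h2 : 1 ≤ i
        · rw [if_pos h1, if_pos h1, if_pos h2, if_pos h2]; ring
        · rw [if_pos h1, if_pos h1, if_neg h2, if_neg h2]; ring
      · by_cases h2 : 1 ≤ i
        · rw [if_neg h1, if_neg h1, if_pos h2, if_pos h2]; ring
        · rw [if_neg h1, if_neg h1, if_neg h2, if_neg h2]; ring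
    rw [Finset.sum_congr rfl (fun i _ => e1 i)]
    rw [Finset.sum_add_distrib, Finset.sum_add_distrib, Finset.sum_add_distrib]
    have hA1 : ∑ i ∈ range n, (-2:ℝ) * (y i)^2 = -2 * S := by
      rw [hS, Finset.mul_sum]
    have hA2 : (∑ i ∈ range n, if i = n-1 then (-(p:ℝ)) * (y i)^2 else 0)
        = -(p:ℝ) * (y (n-1))^2 := by
      rw [Finset.sum_ite_eq' (range n) (n-1) (fun i => (-(p:ℝ)) * (y i)^2)]
      rw [if_pos (mem_range.mpr (by omega))]
    have hB : (∑ i ∈ range n, if 1 ≤ i then y i * y (i-1) else 0) = T := by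
      rw [show n = (n-1) + 1 by omega, Finset.sum_range_succ']
      simp only [le_add_iff_nonneg_left, zero_le, if_true, Nat.add_sub_cancel]
      rw [if_neg (by omega), add_zero, hT]
      exact Finset.sum_congr rfl (fun i _ => mul_comm _ _)
    have hC : (∑ i ∈ range n, y i * y (i+1)) = T := by
      rw [show n = (n-1) + 1 by omega, Finset.sum_range_succ]
      rw [hy0 ((n-1)+1) (by omega), mul_zero, add_zero, hT]
    rw [hA1, hA2, hB, hC]
    ring
  rw [hL]
  -- Step C: compare with the sum of squares
  have hS1 : ∑ i ∈ range (n-1), (y i)^2 = S - (y (n-1))^2 := by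
    have : S = (∑ i ∈ range (n-1), (y i)^2) + (y (n-1))^2 := by
      rw [hS, show n = (n-1)+1 by omega, Finset.sum_range_succ]
      simp [Nat.add_sub_cancel]
    linarith
  have hS2 : ∑ i ∈ range (n-1), (y (i+1))^2 = S - (y 0)^2 := by
    have : S = (∑ i ∈ range (n-1), (y (i+1))^2) + (y 0)^2 := by
      rw [hS, show n = (n-1)+1 by omega, Finset.sum_range_succ']
      simp [Nat.add_sub_cancel]
    linarith
  set D := ∑ i ∈ range (n-1), (y i - y (i+1))^2 with hD
  have hDval : D = (S - (y (n-1))^2) + (S - (y 0)^2) - 2*T := by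
    rw [hD]
    have e2 : ∀ i, (y i - y (i+1))^2
        = ((y i)^2 + (y (i+1))^2) - 2*(y i * y (i+1)) := fun i => by ring
    rw [Finset.sum_congr rfl (fun i _ => e2 i), Finset.sum_sub_distrib,
      Finset.sum_add_distrib, hS1, hS2, ← Finset.mul_sum, ← hT]
  have hkey : -2*S - (p:ℝ) * (y (n-1))^2 + 2*T
      = -((y 0)^2 + D + ((p:ℝ)+1) * (y (n-1))^2) := by
    rw [hDval]; ring
  rw [hkey]
  -- Step D: positivity of the sum of squares
  have hDnn : 0 ≤ D := Finset.sum_nonneg (fun i _ => sq_nonneg _)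
  have hp1 : (0:ℝ) ≤ ((p:ℝ)+1) * (y (n-1))^2 := by positivity
  by_contra hle
  push_neg at hle
  have h0 : (y 0)^2 + D + ((p:ℝ)+1) * (y (n-1))^2 ≤ 0 := by linarith
  have hy00 : y 0 = 0 := by
    have : (y 0)^2 ≤ 0 := by linarith [sq_nonneg (y 0)]
    nlinarith [sq_nonneg (y 0)]
  have hDz : D = 0 := by linarith [sq_nonneg (y 0)]
  have hdiff : ∀ i ∈ range (n-1), (y i - y (i+1))^2 = 0 := by
    rw [hD] at hDz
    exact (Finset.sum_eq_zero_iff_of_nonneg (fun i _ => sq_nonneg _)).mp hDz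
  have hall : ∀ i, i < n → y i = 0 := by
    intro i
    induction i with
    | zero => intro _; exact hy00
    | succ k ih =>
      intro hk
      have hk0 : y k = 0 := ih (by omega)
      have h1 := hdiff k (mem_range.mpr (by omega))
      have h2 : y k - y (k+1) = 0 := by
        nlinarith [sq_nonneg (y k - y (k+1))]
      linarith
  apply hx
  funext k
  have := hall (k:ℕ) k.isLt
  rw [hyx] at this
  simpa using this
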